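/- arXiv:1510.06720 — 2 statements merged into one kernel-verified Lean document; each statement's English description precedes it below -/
import Mathlib

section
/- The exact formula for the log-determinant of the Laplacian on the round sphere, log det'Δ_{L^k} = 2 Σ_{j=1}^{k} (k-j) log(j+1) - (k+1) log((k+1)!) - 4ζ'(-1) + (k+1)^2/2, has the large-k asymptotics log det'Δ_{L^k} = -(k/2) log(k/(2π)) - (2/3) log k + O(1). -/
open Filter

/-- The exact spectral determinant on the round sphere:
`log det'Δ_{L^k} = 2 Σ_{j=1}^{k} (k-j) log(j+1) - (k+1) log((k+1)!) - 4ζ'(-1) + (k+1)²/2`. -/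
noncomputable def sphereLogDet (k : ℕ) : ℝ :=
  2 * ∑ j ∈ Finset.Icc 1 k, ((k : ℝ) - j) * Real.log (j + 1)
    - ((k : ℝ) + 1) * Real.log (Nat.factorial (k + 1))
    - 4 * (deriv riemannZeta (-1)).re
    + ((k : ℝ) + 1) ^ 2 / 2

/-!
With `n = k + 1`, the sum in `sphereLogDet k` equals `n log n! - Σ_{m ≤ n} m log m`. Stirling's
formula with Robbins' error bound gives `log n!` up to `O(1/n)`, an error that survives
multiplication by `n`. The log-hyperfactorial `Σ_{m ≤ n} m log m` equals
`(n²/2 + n/2 + 1/12) log n - n²/4 + O(1)`: the increments of the remainder are `O(1/n²)` by the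
third-order Taylor expansion of `log (1 + 1/n)`, so the remainder converges. Substituting both,
the leading terms cancel and leave `-(k/2) log (k/(2π)) - (2/3) log k + O(1)`.
-/

open Real Asymptotics Finset Topology
open scoped Nat

theorem abs_log_one_add_sub_cubic_le {x : ℝ} (hx : |x| ≤ 1 / 2) :
    |log (1 + x) - (x - x ^ 2 / 2 + x ^ 3 / 3)| ≤ 2 * x ^ 4 := by
  have h := abs_log_sub_add_sum_range_le (x := -x) (by rw [abs_neg]; linarith) 3
  simp only [sum_range_succ, sum_range_zero, abs_neg, sub_neg_eq_add] at h
  have hx4 : |x| ^ 4 = x ^ 4 := by rw [← abs_pow, abs_of_nonneg (by positivity)]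
  calc |log (1 + x) - (x - x ^ 2 / 2 + x ^ 3 / 3)|
      = |0 + (-x) ^ (0 + 1) / ((0 : ℕ) + 1) + (-x) ^ (1 + 1) / ((1 : ℕ) + 1)
          + (-x) ^ (2 + 1) / ((2 : ℕ) + 1) + log (1 + x)| := by
        congr 1; push_cast; ring
    _ ≤ |x| ^ (3 + 1) / (1 - |x|) := h
    _ ≤ 2 * x ^ 4 := by
        rw [div_le_iff₀ (by linarith), hx4]
        nlinarith [abs_nonneg x, pow_two_nonneg (x ^ 2)]

theorem log_factorial_eq_sum (n : ℕ) : log n ! = ∑ m ∈ range n, log ((m : ℝ) + 1) := by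
  rw [← prod_range_add_one_eq_factorial, Nat.cast_prod, log_prod (fun m _ => by positivity)]
  push_cast
  rfl

noncomputable def logHyperfactorial (n : ℕ) : ℝ :=
  ∑ m ∈ range n, ((m : ℝ) + 1) * log ((m : ℝ) + 1)

theorem sum_sub_mul_log_succ_eq (k : ℕ) :
    ∑ j ∈ Icc 1 k, ((k : ℝ) - j) * log (j + 1)
      = ((k : ℝ) + 1) * log (k + 1)! - logHyperfactorial (k + 1) := by
  rw [log_factorial_eq_sum, logHyperfactorial, mul_sum, ← sum_sub_distrib, sum_range_succ',
    ← Ico_add_one_right_eq_Icc, sum_Ico_eq_sum_range]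
  simp only [Nat.cast_zero, zero_add, log_one, mul_zero, sub_zero, add_zero, Nat.add_sub_cancel]
  refine sum_congr rfl fun m _ => ?_
  push_cast
  ring_nf

/-- Its limit is `log A`, with `A` the Glaisher–Kinkelin constant. -/
noncomputable def logHyperfactorialRemainder (n : ℕ) : ℝ :=
  logHyperfactorial n - (((n : ℝ) ^ 2 / 2 + n / 2 + 1 / 12) * log n - (n : ℝ) ^ 2 / 4)

theorem logHyperfactorialRemainder_succ_sub {n : ℕ} (hn : n ≠ 0) :
    logHyperfactorialRemainder (n + 1) - logHyperfactorialRemainder n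
      = (2 * n + 1) / 4 - (((n : ℝ) ^ 2 + n) / 2 + 1 / 12) * log (1 + 1 / n) := by
  have hn' : (n : ℝ) ≠ 0 := by exact_mod_cast hn
  have hlog : log ((n : ℝ) + 1) = log n + log (1 + 1 / n) := by
    rw [← log_mul hn' (by positivity), mul_add, mul_one_div_cancel hn', mul_one]
  simp only [logHyperfactorialRemainder, logHyperfactorial, sum_range_succ]
  push_cast
  rw [hlog]
  ring

theorem abs_logHyperfactorialRemainder_succ_sub_le {n : ℕ} (hn : 2 ≤ n) :
    |logHyperfactorialRemainder (n + 1) - logHyperfactorialRemainder n| ≤ 3 / (n : ℝ) ^ 2 := by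
  have hn2 : (2 : ℝ) ≤ n := by exact_mod_cast hn
  set x : ℝ := 1 / n with hx
  have htaylor := abs_log_one_add_sub_cubic_le (x := x)
    (by rw [abs_of_pos (by positivity)]; exact div_le_div_of_nonneg_left zero_le_one two_pos hn2)
  set c : ℝ := ((n : ℝ) ^ 2 + n) / 2 + 1 / 12
  have hc : 0 ≤ c := by positivity
  -- the cubic Taylor polynomial of `log (1 + x)` matches `(2n + 1)/4` up to `O(1/n²)`
  have hsplit : (2 * n + 1) / 4 - c * log (1 + x)
      = -(1 / (8 * n ^ 2) + 1 / (36 * n ^ 3))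
        + c * ((x - x ^ 2 / 2 + x ^ 3 / 3) - log (1 + x)) := by
    simp only [c, hx]; field_simp; ring
  rw [logHyperfactorialRemainder_succ_sub (by omega), hsplit]
  calc _ ≤ |-(1 / (8 * (n : ℝ) ^ 2) + 1 / (36 * n ^ 3))|
        + |c * ((x - x ^ 2 / 2 + x ^ 3 / 3) - log (1 + x))| := abs_add_le _ _
    _ ≤ (1 / (8 * n ^ 2) + 1 / (36 * n ^ 3)) + c * (2 * x ^ 4) := by
        rw [abs_neg, abs_of_pos (by positivity), abs_mul, abs_of_nonneg hc, abs_sub_comm]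
        gcongr
    _ ≤ 3 / (n : ℝ) ^ 2 := by
        simp only [c, hx]
        field_simp
        nlinarith

theorem logHyperfactorialRemainder_isBigO_one :
    logHyperfactorialRemainder =O[atTop] (fun _ => (1 : ℝ)) := by
  have hdist : (fun n => dist (logHyperfactorialRemainder n) (logHyperfactorialRemainder n.succ))
      =O[atTop] (fun n : ℕ => 1 / (n : ℝ) ^ 2) := by
    refine IsBigO.of_bound 3 ?_
    filter_upwards [eventually_ge_atTop 2] with n hn
    rw [Real.norm_eq_abs, Real.norm_eq_abs, abs_dist, dist_comm, Real.dist_eq,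
      abs_of_nonneg (by positivity : (0 : ℝ) ≤ 1 / (n : ℝ) ^ 2), ← mul_div_assoc, mul_one]
    exact abs_logHyperfactorialRemainder_succ_sub_le hn
  obtain ⟨_, hlim⟩ := cauchySeq_tendsto_of_complete <| cauchySeq_of_summable_dist <|
    summable_of_isBigO_nat (Real.summable_one_div_nat_pow.2 one_lt_two) hdist
  exact hlim.isBigO_one ℝ

noncomputable def stirlingRemainder (n : ℕ) : ℝ :=
  log n ! - (n * log n - n + log n / 2 + log (2 * π) / 2)

theorem stirlingRemainder_eq {n : ℕ} (hn : n ≠ 0) :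
    stirlingRemainder n = log (Stirling.stirlingSeq n) - log √π := by
  have hn' : (n : ℝ) ≠ 0 := by exact_mod_cast hn
  rw [stirlingRemainder, Stirling.log_stirlingSeq_formula, log_sqrt pi_pos.le,
    log_mul two_ne_zero hn', log_mul two_ne_zero pi_ne_zero, log_div hn' (exp_ne_zero 1), log_exp]
  ring

theorem stirlingRemainder_nonneg {n : ℕ} (hn : n ≠ 0) : 0 ≤ stirlingRemainder n :=
  sub_nonneg.2 (Stirling.le_log_factorial_stirling hn)

theorem stirlingRemainder_le {n : ℕ} (hn : n ≠ 0) : stirlingRemainder n ≤ 1 / (12 * n) := by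
  -- Robbins' bound `1 / (12 m (m + 1)) = 1 / (12 m) - 1 / (12 (m + 1))` makes this monotone
  set u : ℕ → ℝ := fun m => log (Stirling.stirlingSeq (m + 1)) - 1 / (12 * (m + 1 : ℕ))
  have hmono : Monotone u := by
    refine monotone_nat_of_le_succ fun m => ?_
    have h := Stirling.log_stirlingSeq_sdiff_le (m + 1)
    have hsplit : (1 : ℝ) / (12 * (m + 1 : ℕ) * ((m + 1 : ℕ) + 1))
        = 1 / (12 * (m + 1 : ℕ)) - 1 / (12 * (m + 1 + 1 : ℕ)) := by
      push_cast; field_simp; ring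
    simp only [u]
    linarith
  have hlim : Tendsto u atTop (𝓝 (log √π - 0)) := by
    refine ((Stirling.tendsto_stirlingSeq_sqrt_pi.comp (tendsto_add_atTop_nat 1)).log
      (sqrt_pos.2 pi_pos).ne').sub ?_
    have h := ((tendsto_one_div_atTop_nhds_zero_nat (𝕜 := ℝ)).div_const 12).comp
      (tendsto_add_atTop_nat 1)
    rw [zero_div] at h
    refine h.congr fun m => ?_
    simp only [Function.comp_apply]
    ring
  obtain ⟨m, rfl⟩ := Nat.exists_eq_succ_of_ne_zero hn
  have := hmono.ge_of_tendsto hlim m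
  rw [stirlingRemainder_eq hn]
  simp only [u, sub_zero] at this
  linarith

theorem natCast_mul_stirlingRemainder_isBigO_one :
    (fun n : ℕ => (n : ℝ) * stirlingRemainder n) =O[atTop] (fun _ => (1 : ℝ)) := by
  refine IsBigO.of_bound (1 / 12) ?_
  filter_upwards [eventually_ne_atTop 0] with n hn
  have hr := stirlingRemainder_nonneg hn
  rw [norm_one, mul_one, Real.norm_eq_abs, abs_of_nonneg (by positivity)]
  calc (n : ℝ) * stirlingRemainder n ≤ n * (1 / (12 * n)) := by
        gcongr; exact stirlingRemainder_le hn
    _ = 1 / 12 := by field_simp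

theorem mul_log_one_add_inv_isBigO_one :
    (fun k : ℕ => ((k : ℝ) / 2 + 2 / 3) * log (1 + 1 / k)) =O[atTop] (fun _ => (1 : ℝ)) := by
  refine IsBigO.of_bound 2 ?_
  filter_upwards [eventually_ne_atTop 0] with k hk
  have hk1 : (1 : ℝ) ≤ k := by exact_mod_cast Nat.one_le_iff_ne_zero.2 hk
  have hlog0 : 0 ≤ log (1 + 1 / k) := log_nonneg (by simp)
  have hlog1 : log (1 + 1 / k) ≤ 1 / k := by
    linarith [log_le_sub_one_of_pos (show (0 : ℝ) < 1 + 1 / k by positivity)]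
  rw [norm_one, mul_one, Real.norm_eq_abs, abs_of_nonneg (by positivity)]
  calc ((k : ℝ) / 2 + 2 / 3) * log (1 + 1 / k) ≤ (k / 2 + 2 / 3) * (1 / k) := by gcongr
    _ = 1 / 2 + 2 / 3 * (1 / k) := by field_simp
    _ ≤ 2 := by linarith [div_le_one_of_le₀ hk1 (by positivity)]

theorem sphereLogDet_add_eq {k : ℕ} (hk : k ≠ 0) :
    sphereLogDet k + (k : ℝ) / 2 * log ((k : ℝ) / (2 * π)) + 2 / 3 * log (k : ℝ)
      = ((k : ℝ) + 1) * stirlingRemainder (k + 1) - 2 * logHyperfactorialRemainder (k + 1)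
        - ((k : ℝ) / 2 + 2 / 3) * log (1 + 1 / k)
        + (log (2 * π) / 2 - 4 * (deriv riemannZeta (-1)).re) := by
  have hk' : (k : ℝ) ≠ 0 := by exact_mod_cast hk
  have hlog : log ((k : ℝ) + 1) = log k + log (1 + 1 / k) := by
    rw [← log_mul hk' (by positivity), mul_add, mul_one_div_cancel hk', mul_one]
  rw [sphereLogDet, sum_sub_mul_log_succ_eq, log_div hk' (by positivity), stirlingRemainder,
    logHyperfactorialRemainder]
  push_cast
  rw [hlog]
  ring

/-- Large-`k` asymptotics of the sphere log-determinant: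
`log det'Δ_{L^k} = -(k/2) log(k/(2π)) - (2/3) log k + O(1)` as `k → ∞`. -/
theorem sphereLogDet_asymptotics :
    (fun k : ℕ => sphereLogDet k + (k : ℝ) / 2 * Real.log ((k : ℝ) / (2 * Real.pi))
        + 2 / 3 * Real.log (k : ℝ))
      =O[atTop] (fun _ => (1 : ℝ)) := by
  have hstirling :=
    natCast_mul_stirlingRemainder_isBigO_one.comp_tendsto (tendsto_add_atTop_nat 1)
  have hhyper := logHyperfactorialRemainder_isBigO_one.comp_tendsto (tendsto_add_atTop_nat 1)
  have hconst := isBigO_const_one ℝ (log (2 * π) / 2 - 4 * (deriv riemannZeta (-1)).re)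
    (atTop : Filter ℕ)
  refine (((hstirling.sub (hhyper.const_mul_left 2)).sub mul_log_one_add_inv_isBigO_one).add
    hconst).congr' ?_ EventuallyEq.rfl
  filter_upwards [eventually_ne_atTop 0] with k hk
  rw [sphereLogDet_add_eq hk]
  simp
end

section
/- Given the heat kernel expansions, the finite (ε→0) part of the variation δ log(det'Δ_s^- /Z_k) equals (1/2π)∫_Σ [((s-1)/2 Δ_g δφ + kδψ)(B/2 + (1-3s)R/12) - (s/2 Δ_g δφ + kδψ)(-B/2 + (3s-2)R/12)] √g d²z = k²δS_2 - k((1-2s)/2)δS_1 - ((1-2s)²/4 - 1/12)δS_L, using the variational formulas for S_2, S_1, S_L. -/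
/-!
The expanded integrand is a linear combination of `Δ_g δφ · B`, `Δ_g δφ · R`, `δψ · B`
and `δψ · R`. Self-adjointness of `Δ_g` moves the Laplacian onto `B` and `R`, after which the
coefficients match those of `k² δS₂ - k (1 - 2s)/2 · δS₁ - ((1 - 2s)²/4 - 1/12) δS_L`; note
`(1 - 2s)²/4 - 1/12 = (6s² - 6s + 1)/6`.
-/

open MeasureTheory

theorem integral_const_mul_add_const_mul {X : Type*} [MeasurableSpace X] {μ : Measure X}
    {f g : X → ℝ} (hf : Integrable f μ) (hg : Integrable g μ) (a b : ℝ) :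
    ∫ x, (a * f x + b * g x) ∂μ = a * ∫ x, f x ∂μ + b * ∫ x, g x ∂μ := by
  rw [integral_add (hf.const_mul a) (hg.const_mul b), integral_const_mul, integral_const_mul]

theorem integral_const_mul_add_const_mul_add {X : Type*} [MeasurableSpace X] {μ : Measure X}
    {f g u v : X → ℝ} (hf : Integrable f μ) (hg : Integrable g μ) (hu : Integrable u μ)
    (hv : Integrable v μ) (a b c d : ℝ) :
    ∫ x, ((a * f x + b * g x) + (c * u x + d * v x)) ∂μ
      = (a * ∫ x, f x ∂μ + b * ∫ x, g x ∂μ) + (c * ∫ x, u x ∂μ + d * ∫ x, v x ∂μ) := by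
  rw [integral_add ?_ ?_, integral_const_mul_add_const_mul hf hg,
    integral_const_mul_add_const_mul hu hv]
  · exact (hf.const_mul a).add (hg.const_mul b)
  · exact (hu.const_mul c).add (hv.const_mul d)

theorem finitePart_integrand_eq (s k a b r p : ℝ) :
    ((s - 1) / 2 * a + k * p) * (b / 2 + (1 - 3 * s) * r / 12)
        - (s / 2 * a + k * p) * (-b / 2 + (3 * s - 2) * r / 12)
      = ((2 * s - 1) / 4 * (a * b) + (-6 * s ^ 2 + 6 * s - 1) / 24 * (a * r))
        + (k * (p * b) + k * (1 - 2 * s) / 4 * (p * r)) := by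
  ring

theorem finite_part_variation_general {X : Type*} [MeasurableSpace X] (μ : Measure X)
    (k s : ℝ) (hk : 0 < k)
    (Δg : (X → ℝ) →ₗ[ℝ] (X → ℝ)) (B R δφ δψ : X → ℝ)
    (hsaB : ∫ x, Δg δφ x * B x ∂μ = ∫ x, δφ x * Δg B x ∂μ)
    (hsaR : ∫ x, Δg δφ x * R x ∂μ = ∫ x, δφ x * Δg R x ∂μ)
    (i1 : Integrable (fun x => δψ x * B x) μ)
    (i2 : Integrable (fun x => δψ x * R x) μ)
    (i3 : Integrable (fun x => Δg δφ x * B x) μ)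
    (i4 : Integrable (fun x => Δg δφ x * R x) μ)
    (i5 : Integrable (fun x => δφ x * Δg B x) μ) :
    (1 / (2 * Real.pi)) *
        ∫ x, (((s - 1) / 2 * Δg δφ x + k * δψ x) * (B x / 2 + (1 - 3 * s) * R x / 12)
          - (s / 2 * Δg δφ x + k * δψ x) * (-(B x) / 2 + (3 * s - 2) * R x / 12)) ∂μ
    = k ^ 2 * ((1 / (2 * Real.pi)) * ∫ x, (B x / k) * δψ x ∂μ)
      - k * ((1 - 2 * s) / 2) *
          ((1 / (4 * Real.pi)) * ∫ x, (-(R x) * δψ x + (1 / k) * Δg B x * δφ x) ∂μ)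
      - ((1 - 2 * s) ^ 2 / 4 - 1 / 12) *
          ((1 / (8 * Real.pi)) * ∫ x, Δg R x * δφ x ∂μ) := by
  simp_rw [finitePart_integrand_eq]
  rw [integral_const_mul_add_const_mul_add i3 i4 i1 i2]
  have hS₂ : ∫ x, B x / k * δψ x ∂μ = k⁻¹ * ∫ x, δψ x * B x ∂μ := by
    rw [← integral_const_mul]
    simp_rw [div_eq_inv_mul, mul_assoc, mul_comm (B _)]
  have hS₁ : ∫ x, (-(R x) * δψ x + (1 / k) * Δg B x * δφ x) ∂μ
      = -1 * ∫ x, δψ x * R x ∂μ + 1 / k * ∫ x, δφ x * Δg B x ∂μ := by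
    rw [← integral_const_mul_add_const_mul i2 i5]
    congr 1 with x
    ring
  have hSL : ∫ x, Δg R x * δφ x ∂μ = ∫ x, δφ x * Δg R x ∂μ := by
    simp_rw [mul_comm (Δg R _)]
  rw [hS₂, hS₁, hSL, hsaB, hsaR]
  field_simp
  ring

/-- The finite (`ε → 0`) part of the variation `δ log(det'Δ_s^- ÷ Z_k)` equals
`(1/2π)∫_Σ [((s-1)/2 Δ_g δφ + kδψ)(B/2 + (1-3s)R/12)
           - (s/2 Δ_g δφ + kδψ)(-B/2 + (3s-2)R/12)] √g d²z
 = k² δS_2 - k((1-2s)/2) δS_1 - ((1-2s)²/4 - 1/12) δS_L`,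
using the variational formulas
`δS_2 = (1/2π)∫ (B/k) δψ √g`, `δS_1 = (1/4π)∫ (-R δψ + (1/k)(Δ_g B) δφ) √g`,
`δS_L = (1/8π)∫ (Δ_g R) δφ √g`, integration by parts (self-adjointness of `Δ_g`) on
the closed surface `Σ`, the flux normalization `(1/2π)∫ B√g = k`, and Gauss–Bonnet
`(1/4π)∫ R√g = χ(Σ)`.  Here `μ` is the volume measure `√g d²z`. -/
theorem finite_part_variation {X : Type*} [MeasurableSpace X] (μ : Measure X)
    (k s χ : ℝ) (hk : 0 < k)
    (Δg : (X → ℝ) →ₗ[ℝ] (X → ℝ)) (B R δφ δψ : X → ℝ)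
    (hflux : (1 / (2 * Real.pi)) * ∫ x, B x ∂μ = k)
    (hGB : (1 / (4 * Real.pi)) * ∫ x, R x ∂μ = χ)
    (hsaB : ∫ x, Δg δφ x * B x ∂μ = ∫ x, δφ x * Δg B x ∂μ)
    (hsaR : ∫ x, Δg δφ x * R x ∂μ = ∫ x, δφ x * Δg R x ∂μ)
    (i1 : Integrable (fun x => δψ x * B x) μ)
    (i2 : Integrable (fun x => δψ x * R x) μ)
    (i3 : Integrable (fun x => Δg δφ x * B x) μ)
    (i4 : Integrable (fun x => Δg δφ x * R x) μ)
    (i5 : Integrable (fun x => δφ x * Δg B x) μ)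
    (i6 : Integrable (fun x => δφ x * Δg R x) μ) :
    (1 / (2 * Real.pi)) *
        ∫ x, (((s - 1) / 2 * Δg δφ x + k * δψ x) * (B x / 2 + (1 - 3 * s) * R x / 12)
          - (s / 2 * Δg δφ x + k * δψ x) * (-(B x) / 2 + (3 * s - 2) * R x / 12)) ∂μ
    = k ^ 2 * ((1 / (2 * Real.pi)) * ∫ x, (B x / k) * δψ x ∂μ)
      - k * ((1 - 2 * s) / 2) *
          ((1 / (4 * Real.pi)) * ∫ x, (-(R x) * δψ x + (1 / k) * Δg B x * δφ x) ∂μ)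
      - ((1 - 2 * s) ^ 2 / 4 - 1 / 12) *
          ((1 / (8 * Real.pi)) * ∫ x, Δg R x * δφ x ∂μ) :=
  finite_part_variation_general μ k s hk Δg B R δφ δψ hsaB hsaR i1 i2 i3 i4 i5
end
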